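/- arXiv:cond-mat/0505734 — 2 statements merged into one kernel-verified Lean document; each statement's English description precedes it below -/
import Mathlib

section
/- Let V₁,…,V_N be independent centered Gaussian random variables and let P be a polynomial function of (V₁,…,V_N) of total degree d. Let s₁,…,s_N be nonnegative integers and δ₁,…,δ_N ∈ {0,1}. Then E[∏ᵢ Vᵢ^{2sᵢ+δᵢ} · P(V)] = Q(s₁,…,s_N) · ∏ᵢ (2sᵢ + 2δᵢ - 1)!! · E[Vᵢ²]^{sᵢ}, where Q is a polynomial in (s₁,…,s_N) of total degree at most (d - Σᵢ δᵢ)/2. -/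
/-!
Expanding `P` into monomials and using independence, the average factors into one-dimensional
Gaussian moments `E[X ^ (2 s + δ + n)]`. These vanish for odd exponents, and for
`n = δ + 2 t` the moment `(2 (s + δ + t) - 1)‼ v ^ (s + δ + t)` equals
`(2 s + 2 δ - 1)‼ v ^ s` times `v ^ (δ + t) ∏_{j < t} (2 (s + δ + j) + 1)`, a polynomial of
degree `t` in `s`. Summing over the monomials of `P`, each contributes degree at most
`(deg m - Σ δ) / 2`. The even moments themselves come from the recursion
`E[X ^ (n + 2)] = (n + 1) v E[X ^ n]`, i.e. Gaussian integration by parts.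
-/

open MeasureTheory ProbabilityTheory Real Finset
open scoped NNReal Nat Polynomial

lemma Nat.doubleFactorial_two_mul_add_sub_one (a t : ℕ) :
    (2 * (a + t) - 1)‼ = (∏ j ∈ range t, (2 * (a + j) + 1)) * (2 * a - 1)‼ := by
  induction t with
  | zero => simp
  | succ t ih =>
    rw [show 2 * (a + (t + 1)) - 1 = 2 * (a + t) + 1 by omega, Nat.doubleFactorial_add_one,
      ih, prod_range_succ]
    ring

lemma MvPolynomial.totalDegree_toMvPolynomial_le {R σ : Type*} [CommSemiring R] (p : R[X])
    (i : σ) :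
    (p.toMvPolynomial i).totalDegree ≤ p.natDegree := by
  conv_lhs => rw [p.as_sum_range_C_mul_X_pow]
  simp only [map_sum, map_mul, map_pow, Polynomial.toMvPolynomial_C, Polynomial.toMvPolynomial_X,
    MvPolynomial.C_mul_X_pow_eq_monomial]
  refine totalDegree_finsetSum_le fun k hk ↦ (totalDegree_monomial_le _ _).trans ?_
  simpa [Nat.lt_succ_iff] using hk

lemma integral_pow_add_two_mul_exp_neg_mul_sq {b : ℝ} (hb : 0 < b) (n : ℕ) :
    ∫ x : ℝ, x ^ (n + 2) * exp (-b * x ^ 2)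
      = (n + 1) / (2 * b) * ∫ x : ℝ, x ^ n * exp (-b * x ^ 2) := by
  have hint (k : ℕ) : Integrable (fun x : ℝ ↦ x ^ k * exp (-b * x ^ 2)) := by
    simpa using
      integrable_rpow_mul_exp_neg_mul_sq hb (s := k) (by linarith [k.cast_nonneg (α := ℝ)])
  -- integrate the derivative of `x ^ (n + 1) * exp (-b * x ^ 2)` over the line
  have hderiv (x : ℝ) : HasDerivAt (fun y ↦ y ^ (n + 1) * exp (-b * y ^ 2))
      ((n + 1) * (x ^ n * exp (-b * x ^ 2)) - 2 * b * (x ^ (n + 2) * exp (-b * x ^ 2))) x := by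
    refine ((hasDerivAt_pow (n + 1) x).fun_mul
      ((hasDerivAt_pow 2 x).const_mul (-b)).exp).congr_deriv ?_
    push_cast
    ring
  have hzero := integral_eq_zero_of_hasDerivAt_of_integrable hderiv
    (((hint n).const_mul _).sub ((hint (n + 2)).const_mul _)) (hint (n + 1))
  rw [integral_sub ((hint n).const_mul _) ((hint (n + 2)).const_mul _), integral_const_mul,
    integral_const_mul] at hzero
  rw [div_mul_eq_mul_div, eq_div_iff (by positivity)]
  linear_combination -hzero

namespace MeasureTheory

lemma integral_prod_pow_mul_eval_pi {ι : Type*} [Fintype ι] (μ : ι → Measure ℝ)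
    [∀ i, SigmaFinite (μ i)] (hμ : ∀ i n, Integrable (fun x ↦ x ^ n) (μ i))
    (a : ι → ℕ) (P : MvPolynomial ι ℝ) :
    ∫ x, (∏ i, x i ^ a i) * MvPolynomial.eval x P ∂Measure.pi μ
      = ∑ m ∈ P.support, P.coeff m * ∏ i, ∫ y, y ^ (a i + m i) ∂μ i := by
  have hexpand (x : ι → ℝ) : (∏ i, x i ^ a i) * MvPolynomial.eval x P
      = ∑ m ∈ P.support, P.coeff m * ∏ i, x i ^ (a i + m i) := by
    simp only [MvPolynomial.eval_eq', mul_sum, pow_add, prod_mul_distrib]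
    ring_nf
  simp_rw [hexpand]
  rw [integral_finsetSum _ fun m _ ↦ (Integrable.fintype_prod fun i ↦ hμ i _).const_mul _]
  refine sum_congr rfl fun m _ ↦ ?_
  rw [integral_const_mul, integral_fintype_prod_eq_prod (fun i y ↦ y ^ (a i + m i))]

end MeasureTheory

namespace ProbabilityTheory

lemma integral_pow_gaussianReal_of_var_ne_zero {v : ℝ≥0} (hv : v ≠ 0) (n : ℕ) :
    ∫ x, x ^ n ∂gaussianReal 0 v
      = (√(2 * π * v))⁻¹ * ∫ x : ℝ, x ^ n * exp (-(2 * v : ℝ)⁻¹ * x ^ 2) := by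
  rw [integral_gaussianReal_eq_integral_smul hv, ← integral_const_mul]
  congr 1 with x
  rw [gaussianPDFReal_def, smul_eq_mul]
  ring_nf

lemma integral_pow_add_two_gaussianReal (v : ℝ≥0) (n : ℕ) :
    ∫ x, x ^ (n + 2) ∂gaussianReal 0 v = (n + 1) * v * ∫ x, x ^ n ∂gaussianReal 0 v := by
  rcases eq_or_ne v 0 with rfl | hv
  · simp [gaussianReal_zero_var]
  have hb : 0 < (2 * v : ℝ)⁻¹ := by positivity
  rw [integral_pow_gaussianReal_of_var_ne_zero hv, integral_pow_gaussianReal_of_var_ne_zero hv,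
    integral_pow_add_two_mul_exp_neg_mul_sq hb]
  field_simp

lemma integral_pow_odd_gaussianReal (v : ℝ≥0) (k : ℕ) :
    ∫ x, x ^ (2 * k + 1) ∂gaussianReal 0 v = 0 := by
  induction k with
  | zero => simp
  | succ k ih => rw [show 2 * (k + 1) + 1 = 2 * k + 1 + 2 by ring,
      integral_pow_add_two_gaussianReal, ih, mul_zero]

lemma integral_pow_even_gaussianReal (v : ℝ≥0) (k : ℕ) :
    ∫ x, x ^ (2 * k) ∂gaussianReal 0 v = (2 * k - 1)‼ * (v : ℝ) ^ k := by
  induction k with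
  | zero => simp
  | succ k ih =>
    rw [show 2 * (k + 1) = 2 * k + 2 by ring, integral_pow_add_two_gaussianReal, ih,
      show 2 * k + 2 - 1 = 2 * k + 1 by omega, Nat.doubleFactorial_add_one]
    push_cast
    ring

lemma integrable_pow_gaussianReal (μ : ℝ) (v : ℝ≥0) (n : ℕ) :
    Integrable (fun x ↦ x ^ n) (gaussianReal μ v) :=
  ((memLp_id_gaussianReal n).integrable_norm_pow').mono' (by fun_prop)
    (ae_of_all _ fun x ↦ by simp)

open Polynomial in
noncomputable def gaussianMomentPoly (v : ℝ≥0) (δ n : ℕ) : ℝ[X] :=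
  if δ ≤ n ∧ Even (n - δ) then
    C ((v : ℝ) ^ (δ + (n - δ) / 2)) *
      ∏ j ∈ range ((n - δ) / 2), (C 2 * X + C ((2 * (δ + j) + 1 : ℕ) : ℝ))
  else 0

open Polynomial in
lemma natDegree_gaussianMomentPoly_le {v : ℝ≥0} {δ n : ℕ}
    (h : gaussianMomentPoly v δ n ≠ 0) :
    2 * (gaussianMomentPoly v δ n).natDegree + δ ≤ n := by
  unfold gaussianMomentPoly at h ⊢
  split_ifs at h ⊢ with hn
  · obtain ⟨hδn, t, ht⟩ := hn
    have hlinear (a : ℝ) (b : ℕ → ℝ) (s : Finset ℕ) :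
        (C a * ∏ j ∈ s, (C 2 * X + C (b j))).natDegree ≤ #s :=
      calc _ ≤ _ := natDegree_C_mul_le _ _
        _ ≤ _ := natDegree_prod_le _ _
        _ ≤ ∑ j ∈ s, 1 := sum_le_sum fun _ _ ↦ natDegree_linear_le
        _ = #s := by simp
    have := hlinear ((v : ℝ) ^ (δ + (n - δ) / 2)) (fun j ↦ ((2 * (δ + j) + 1 : ℕ) : ℝ))
      (range ((n - δ) / 2))
    rw [card_range] at this
    omega
  · exact absurd rfl h

lemma integral_pow_gaussianReal_eq_eval_gaussianMomentPoly (v : ℝ≥0) {δ : ℕ} (hδ : δ ≤ 1)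
    (n s : ℕ) :
    ∫ x, x ^ (2 * s + δ + n) ∂gaussianReal 0 v
      = (gaussianMomentPoly v δ n).eval (s : ℝ) * ((2 * s + 2 * δ - 1)‼ * (v : ℝ) ^ s) := by
  unfold gaussianMomentPoly
  split_ifs with hn
  · obtain ⟨hδn, t, ht⟩ := hn
    rw [show (n - δ) / 2 = t by omega, show 2 * s + δ + n = 2 * (s + δ + t) by omega,
      integral_pow_even_gaussianReal, Nat.doubleFactorial_two_mul_add_sub_one,
      show 2 * (s + δ) - 1 = 2 * s + 2 * δ - 1 by omega]
    simp only [Polynomial.eval_mul, Polynomial.eval_C, Polynomial.eval_prod, Polynomial.eval_add,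
      Polynomial.eval_X]
    push_cast
    ring_nf
  · rw [Nat.even_iff] at hn
    rw [show 2 * s + δ + n = 2 * (s + (δ + n) / 2) + 1 by omega, integral_pow_odd_gaussianReal,
      Polynomial.eval_zero, zero_mul]

section MultiIndex

variable {ι : Type*} [Fintype ι] (v : ι → ℝ≥0) (δ : ι → ℕ)

noncomputable def gaussianAveragePoly (P : MvPolynomial ι ℝ) : MvPolynomial ι ℝ :=
  ∑ m ∈ P.support, MvPolynomial.C (P.coeff m) *
    ∏ i, (gaussianMomentPoly (v i) (δ i) (m i)).toMvPolynomial i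

lemma integral_prod_pow_mul_eval_pi_gaussianReal (hδ : ∀ i, δ i ≤ 1) (P : MvPolynomial ι ℝ)
    (s : ι → ℕ) :
    ∫ x, (∏ i, x i ^ (2 * s i + δ i)) * MvPolynomial.eval x P
        ∂Measure.pi (fun i ↦ gaussianReal 0 (v i))
      = MvPolynomial.eval (fun i ↦ (s i : ℝ)) (gaussianAveragePoly v δ P)
          * ∏ i, ((2 * s i + 2 * δ i - 1)‼ * (v i : ℝ) ^ s i) := by
  rw [integral_prod_pow_mul_eval_pi _ (fun i ↦ integrable_pow_gaussianReal 0 (v i)),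
    gaussianAveragePoly, map_sum, sum_mul]
  refine sum_congr rfl fun m _ ↦ ?_
  simp only [integral_pow_gaussianReal_eq_eval_gaussianMomentPoly _ (hδ _), prod_mul_distrib,
    map_mul, map_prod, MvPolynomial.eval_C, MvPolynomial.eval_toMvPolynomial]
  ring

lemma two_mul_totalDegree_gaussianAveragePoly_le (P : MvPolynomial ι ℝ) :
    2 * (gaussianAveragePoly v δ P).totalDegree ≤ P.totalDegree - ∑ i, δ i := by
  suffices (gaussianAveragePoly v δ P).totalDegree ≤ (P.totalDegree - ∑ i, δ i) / 2 by omega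
  refine MvPolynomial.totalDegree_finsetSum_le fun m hm ↦ ?_
  by_cases hzero : ∃ i, gaussianMomentPoly (v i) (δ i) (m i) = 0
  · obtain ⟨i, hi⟩ := hzero
    rw [prod_eq_zero (mem_univ i) (by rw [hi, map_zero]), mul_zero, MvPolynomial.totalDegree_zero]
    exact Nat.zero_le _
  push Not at hzero
  have hm_deg : ∑ i, m i ≤ P.totalDegree := by
    simpa [Finsupp.sum_fintype] using MvPolynomial.le_totalDegree hm
  have hfactors : 2 * ∑ i, (gaussianMomentPoly (v i) (δ i) (m i)).natDegree + ∑ i, δ i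
      ≤ ∑ i, m i := by
    rw [mul_sum, ← sum_add_distrib]
    exact sum_le_sum fun i _ ↦ natDegree_gaussianMomentPoly_le (hzero i)
  calc _ ≤ (∏ i, (gaussianMomentPoly (v i) (δ i) (m i)).toMvPolynomial i).totalDegree := by
        simpa using MvPolynomial.totalDegree_mul (MvPolynomial.C (P.coeff m)) _
    _ ≤ ∑ i, ((gaussianMomentPoly (v i) (δ i) (m i)).toMvPolynomial i).totalDegree :=
        MvPolynomial.totalDegree_finsetProd _ _
    _ ≤ ∑ i, (gaussianMomentPoly (v i) (δ i) (m i)).natDegree :=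
        sum_le_sum fun i _ ↦ MvPolynomial.totalDegree_toMvPolynomial_le _ _
    _ ≤ _ := by omega

end MultiIndex

end ProbabilityTheory

theorem gaussian_average_power_polynomial_general
    {Ω : Type*} [MeasurableSpace Ω] (μ : Measure Ω)
    (N : ℕ) (V : Fin N → Ω → ℝ) (hVmeas : ∀ i, Measurable (V i))
    (hindep : iIndepFun V μ)
    (v : Fin N → NNReal) (hlaw : ∀ i, Measure.map (V i) μ = gaussianReal 0 (v i))
    (P : MvPolynomial (Fin N) ℝ) (d : ℕ) (hdeg : P.totalDegree = d)
    (δ : Fin N → ℕ) (hδ : ∀ i, δ i ≤ 1) :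
    ∃ Q : MvPolynomial (Fin N) ℝ,
      2 * Q.totalDegree ≤ d - (∑ i, δ i) ∧
      ∀ s : Fin N → ℕ,
        (∫ ω, (∏ i, V i ω ^ (2 * s i + δ i)) *
            MvPolynomial.eval (fun i => V i ω) P ∂μ)
          = MvPolynomial.eval (fun i => (s i : ℝ)) Q *
            ∏ i, (Nat.doubleFactorial (2 * s i + 2 * δ i - 1) : ℝ) *
              (∫ ω, V i ω ^ 2 ∂μ) ^ (s i) := by
  have hjoint : μ.map (fun ω i ↦ V i ω) = Measure.pi fun i ↦ gaussianReal 0 (v i) := by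
    rw [hindep.map_fun_eq_pi_map fun i ↦ (hVmeas i).aemeasurable]
    simp_rw [hlaw]
  have hvar (i : Fin N) : ∫ ω, V i ω ^ 2 ∂μ = v i :=
    calc ∫ ω, V i ω ^ 2 ∂μ = ∫ x, x ^ 2 ∂gaussianReal 0 (v i) := by
          rw [← hlaw i, integral_map (hVmeas i).aemeasurable (by fun_prop)]
      _ = v i := by simpa using integral_pow_even_gaussianReal (v i) 1
  refine ⟨gaussianAveragePoly v δ P, hdeg ▸ two_mul_totalDegree_gaussianAveragePoly_le v δ P,
    fun s ↦ ?_⟩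
  simp_rw [hvar]
  have hcont : Continuous fun x : Fin N → ℝ ↦ (∏ i, x i ^ (2 * s i + δ i)) * P.eval x :=
    (by fun_prop : Continuous fun x : Fin N → ℝ ↦ ∏ i, x i ^ (2 * s i + δ i)).fun_mul
      (MvPolynomial.continuous_eval P)
  rw [← integral_prod_pow_mul_eval_pi_gaussianReal v δ hδ P s, ← hjoint,
    integral_map (by fun_prop) hcont.aestronglyMeasurable]

/-- Averages of powers of independent centered Gaussians times a polynomial:
`E[Π_i V_i^(2s_i+δ_i) · P(V)] = Q(s) · Π_i (2s_i + 2δ_i - 1)‼ · E[V_i²]^(s_i)`,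
where `Q` is a polynomial in the `s_i` of total degree at most `(d - Σ_i δ_i)/2`,
`d` the total degree of `P`. -/
theorem gaussian_average_power_polynomial
    {Ω : Type*} [MeasurableSpace Ω] (μ : Measure Ω) [IsProbabilityMeasure μ]
    (N : ℕ) (V : Fin N → Ω → ℝ) (hVmeas : ∀ i, Measurable (V i))
    (hindep : iIndepFun V μ)
    (v : Fin N → NNReal) (hlaw : ∀ i, Measure.map (V i) μ = gaussianReal 0 (v i))
    (P : MvPolynomial (Fin N) ℝ) (d : ℕ) (hdeg : P.totalDegree = d)
    (δ : Fin N → ℕ) (hδ : ∀ i, δ i ≤ 1) :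
    ∃ Q : MvPolynomial (Fin N) ℝ,
      2 * Q.totalDegree ≤ d - (∑ i, δ i) ∧
      ∀ s : Fin N → ℕ,
        (∫ ω, (∏ i, V i ω ^ (2 * s i + δ i)) *
            MvPolynomial.eval (fun i => V i ω) P ∂μ)
          = MvPolynomial.eval (fun i => (s i : ℝ)) Q *
            ∏ i, (Nat.doubleFactorial (2 * s i + 2 * δ i - 1) : ℝ) *
              (∫ ω, V i ω ^ 2 ∂μ) ^ (s i) :=
  gaussian_average_power_polynomial_general μ N V hVmeas hindep v hlaw P d hdeg δ hδ
end

section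
/- Consider the ODE system ṙᵢ = vᵢ, v̇ᵢ = aᵢ(r, t) with smooth accelerations aᵢ independent of velocities. Define X̃_{i,γ}(r, v, t) = (1/γ!) d^{γ-1}vᵢ/dt^{γ-1} along solutions, viewed as a function of (r, v, t) via the recursion X̃_{i,γ+1}/(γ+1) = Σⱼ [vⱼ ∂X̃_{i,γ}/∂rⱼ + aⱼ(r,t) ∂X̃_{i,γ}/∂vⱼ] + ∂X̃_{i,γ}/∂t with X̃_{i,1} = vᵢ. Then for every γ ≥ 2, X̃_{i,γ}(r, v, t) is a polynomial in the velocity variables v of total degree at most γ - 2, with coefficients that are smooth functions of r and t. -/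
open Finset
open Finset

def PolyV (N d : ℕ) (f : (Fin N → ℝ) → (Fin N → ℝ) → ℝ → ℝ) : Prop :=
  ∃ (S : Finset (Fin N →₀ ℕ)) (c : (Fin N →₀ ℕ) → (Fin N → ℝ) → ℝ → ℝ),
    (∀ m ∈ S, (∑ j, m j) ≤ d) ∧
    (∀ m ∈ S, ContDiff ℝ (⊤ : ℕ∞) (fun p : (Fin N → ℝ) × ℝ => c m p.1 p.2)) ∧
    (∀ r v t, f r v t = ∑ m ∈ S, c m r t * ∏ j, v j ^ m j)

lemma polyV_congr {N d f g} (h : ∀ r v t, f r v t = g r v t) (hf : PolyV N d f) :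
    PolyV N d g := by
  obtain ⟨S, c, h1, h2, h3⟩ := hf
  exact ⟨S, c, h1, h2, fun r v t => by rw [← h r v t]; exact h3 r v t⟩

lemma polyV_mono {N d d' f} (h : d ≤ d') (hf : PolyV N d f) : PolyV N d' f := by
  obtain ⟨S, c, h1, h2, h3⟩ := hf
  exact ⟨S, c, fun m hm => (h1 m hm).trans h, h2, h3⟩

lemma polyV_zero {N d} : PolyV N d (fun _ _ _ => 0) :=
  ⟨∅, fun _ _ _ => 0, by simp, by simp, by simp⟩

lemma polyV_add {N d f g} (hf : PolyV N d f) (hg : PolyV N d g) :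
    PolyV N d (fun r v t => f r v t + g r v t) := by
  classical
  obtain ⟨S1, c1, hd1, hc1, he1⟩ := hf
  obtain ⟨S2, c2, hd2, hc2, he2⟩ := hg
  refine ⟨S1 ∪ S2,
    fun m r t => (if m ∈ S1 then c1 m r t else 0) + (if m ∈ S2 then c2 m r t else 0),
    ?_, ?_, ?_⟩
  · intro m hm; rcases Finset.mem_union.1 hm with h | h
    exacts [hd1 m h, hd2 m h]
  · intro m _
    by_cases h1 : m ∈ S1 <;> by_cases h2 : m ∈ S2 <;>
      simp only [h1, h2, if_true, if_false, add_zero, zero_add]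
    · exact (hc1 m h1).add (hc2 m h2)
    · exact hc1 m h1
    · exact hc2 m h2
    · exact contDiff_const
  · intro r v t
    have e1 : ∑ m ∈ S1 ∪ S2, (if m ∈ S1 then c1 m r t else 0) * ∏ j, v j ^ m j
        = ∑ m ∈ S1, c1 m r t * ∏ j, v j ^ m j := by
      rw [← Finset.sum_subset Finset.subset_union_left
        (fun m _ hm => by rw [if_neg hm, zero_mul])]
      exact Finset.sum_congr rfl fun m hm => by rw [if_pos hm]
    have e2 : ∑ m ∈ S1 ∪ S2, (if m ∈ S2 then c2 m r t else 0) * ∏ j, v j ^ m j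
        = ∑ m ∈ S2, c2 m r t * ∏ j, v j ^ m j := by
      rw [← Finset.sum_subset Finset.subset_union_right
        (fun m _ hm => by rw [if_neg hm, zero_mul])]
      exact Finset.sum_congr rfl fun m hm => by rw [if_pos hm]
    simp only [add_mul, Finset.sum_add_distrib, e1, e2, he1, he2]

lemma polyV_sum {N d} {ι : Type*} (s : Finset ι) (f : ι → (Fin N → ℝ) → (Fin N → ℝ) → ℝ → ℝ)
    (h : ∀ j ∈ s, PolyV N d (f j)) :
    PolyV N d (fun r v t => ∑ j ∈ s, f j r v t) := by
  classical
  induction s using Finset.induction_on with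
  | empty => exact polyV_congr (by simp) polyV_zero
  | @insert a s ha ih =>
    refine polyV_congr (fun r v t => ?_)
      (polyV_add (h a (Finset.mem_insert_self a s)) (ih fun j hj => h j (Finset.mem_insert_of_mem hj)))
    rw [Finset.sum_insert ha]

lemma polyV_smul {N d f} (g : (Fin N → ℝ) → ℝ → ℝ)
    (hg : ContDiff ℝ (⊤ : ℕ∞) (fun p : (Fin N → ℝ) × ℝ => g p.1 p.2)) (hf : PolyV N d f) :
    PolyV N d (fun r v t => g r t * f r v t) := by
  obtain ⟨S, c, h1, h2, h3⟩ := hf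
  refine ⟨S, fun m r t => g r t * c m r t, h1, fun m hm => hg.mul (h2 m hm), fun r v t => ?_⟩
  simp only [h3, Finset.mul_sum]
  exact Finset.sum_congr rfl fun m _ => by ring

lemma polyV_monomial {N d} (g : (Fin N → ℝ) → ℝ → ℝ)
    (hg : ContDiff ℝ (⊤ : ℕ∞) (fun p : (Fin N → ℝ) × ℝ => g p.1 p.2))
    (m : Fin N →₀ ℕ) (hm : (∑ j, m j) ≤ d) :
    PolyV N d (fun r v t => g r t * ∏ j, v j ^ m j) :=
  ⟨{m}, fun _ => g, by simpa using hm, fun _ _ => hg, fun r v t => by simp⟩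

section helpers
variable {N : ℕ}

lemma hasDerivAt_partial_fst (c : (Fin N → ℝ) → ℝ → ℝ)
    (hc : ContDiff ℝ (⊤ : ℕ∞) (fun p : (Fin N → ℝ) × ℝ => c p.1 p.2)) (r : Fin N → ℝ) (t : ℝ)
    (j : Fin N) :
    HasDerivAt (fun x => c (Function.update r j x) t)
      (fderiv ℝ (fun p : (Fin N → ℝ) × ℝ => c p.1 p.2) (r, t) ((Pi.single j 1 : Fin N → ℝ), (0:ℝ)))
      (r j) := by
  classical
  have hup : ∀ x : ℝ, Function.update r j x = Function.update r j 0 + x • (Pi.single j 1 : Fin N → ℝ) := by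
    intro x; funext k
    by_cases h : k = j
    · subst h; simp
    · simp [Function.update_of_ne h, Pi.single_apply, h]
  have hg : HasDerivAt (fun x : ℝ => ((Function.update r j x : Fin N → ℝ), t))
      ((Pi.single j 1 : Fin N → ℝ), (0:ℝ)) (r j) := by
    have h1 : HasDerivAt (fun x : ℝ => Function.update r j 0 + x • (Pi.single j 1 : Fin N → ℝ))
        (Pi.single j 1) (r j) := by
      have := ((hasDerivAt_id (r j)).smul_const (Pi.single j 1 : Fin N → ℝ)).const_add
        (Function.update r j 0)
      simpa using this
    have h1' : HasDerivAt (fun x : ℝ => (Function.update r j x : Fin N → ℝ))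
        (Pi.single j 1) (r j) := by
      simpa only [← hup] using h1
    exact h1'.prodMk (hasDerivAt_const (r j) t)
  have hF := (hc.differentiable (by simp) (r, t)).hasFDerivAt
  have hg' : HasDerivAt (fun x : ℝ => ((Function.update r j x : Fin N → ℝ), t))
      ((Pi.single j 1 : Fin N → ℝ), (0:ℝ)) (r j) := hg
  have heq : ((Function.update r j (r j) : Fin N → ℝ), t) = (r, t) := by
    rw [Function.update_eq_self]
  have hF' : HasFDerivAt (fun p : (Fin N → ℝ) × ℝ => c p.1 p.2)
      (fderiv ℝ (fun p : (Fin N → ℝ) × ℝ => c p.1 p.2) (r, t))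
      ((Function.update r j (r j) : Fin N → ℝ), t) := by rw [heq]; exact hF
  have := hF'.comp_hasDerivAt (r j) hg'
  exact this

lemma hasDerivAt_partial_snd (c : (Fin N → ℝ) → ℝ → ℝ)
    (hc : ContDiff ℝ (⊤ : ℕ∞) (fun p : (Fin N → ℝ) × ℝ => c p.1 p.2)) (r : Fin N → ℝ) (t : ℝ) :
    HasDerivAt (fun x => c r x)
      (fderiv ℝ (fun p : (Fin N → ℝ) × ℝ => c p.1 p.2) (r, t) ((0 : Fin N → ℝ), (1:ℝ)))
      t := by
  have hg : HasDerivAt (fun x : ℝ => ((r : Fin N → ℝ), x)) ((0 : Fin N → ℝ), (1:ℝ)) t :=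
    (hasDerivAt_const t r).prodMk (hasDerivAt_id t)
  have hF := (hc.differentiable (by simp) (r, t)).hasFDerivAt
  have := hF.comp_hasDerivAt t hg
  exact this

lemma contDiff_fderiv_apply (F : ((Fin N → ℝ) × ℝ) → ℝ) (hF : ContDiff ℝ (⊤ : ℕ∞) F)
    (w : (Fin N → ℝ) × ℝ) :
    ContDiff ℝ (⊤ : ℕ∞) (fun p => fderiv ℝ F p w) :=
  (hF.fderiv_right (by simp)).clm_apply contDiff_const

end helpers

lemma polyV_rderiv {N d f} (j : Fin N) (hf : PolyV N d f) :
    PolyV N d (fun r v t => deriv (fun x => f (Function.update r j x) v t) (r j)) := by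
  obtain ⟨S, c, h1, h2, h3⟩ := hf
  refine ⟨S, fun m r t => fderiv ℝ (fun p : (Fin N → ℝ) × ℝ => c m p.1 p.2) (r, t)
      ((Pi.single j 1 : Fin N → ℝ), (0:ℝ)), h1,
      fun m hm => contDiff_fderiv_apply _ (h2 m hm) _, fun r v t => ?_⟩
  have hD : HasDerivAt (fun x => f (Function.update r j x) v t)
      (∑ m ∈ S, fderiv ℝ (fun p : (Fin N → ℝ) × ℝ => c m p.1 p.2) (r, t)
        ((Pi.single j 1 : Fin N → ℝ), (0:ℝ)) * ∏ k, v k ^ m k) (r j) := by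
    have hfun : (fun x => f (Function.update r j x) v t)
        = fun x => ∑ m ∈ S, c m (Function.update r j x) t * ∏ k, v k ^ m k := by
      funext x; exact h3 _ _ _
    rw [hfun]
    exact HasDerivAt.fun_sum fun m hm =>
      (hasDerivAt_partial_fst (c m) (h2 m hm) r t j).mul_const _
  exact hD.deriv

lemma polyV_tderiv {N d f} (hf : PolyV N d f) :
    PolyV N d (fun r v t => deriv (fun x => f r v x) t) := by
  obtain ⟨S, c, h1, h2, h3⟩ := hf
  refine ⟨S, fun m r t => fderiv ℝ (fun p : (Fin N → ℝ) × ℝ => c m p.1 p.2) (r, t)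
      ((0 : Fin N → ℝ), (1:ℝ)), h1,
      fun m hm => contDiff_fderiv_apply _ (h2 m hm) _, fun r v t => ?_⟩
  have hD : HasDerivAt (fun x => f r v x)
      (∑ m ∈ S, fderiv ℝ (fun p : (Fin N → ℝ) × ℝ => c m p.1 p.2) (r, t)
        ((0 : Fin N → ℝ), (1:ℝ)) * ∏ k, v k ^ m k) t := by
    have hfun : (fun x => f r v x)
        = fun x => ∑ m ∈ S, c m r x * ∏ k, v k ^ m k := by
      funext x; exact h3 _ _ _
    rw [hfun]
    exact HasDerivAt.fun_sum fun m hm =>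
      (hasDerivAt_partial_snd (c m) (h2 m hm) r t).mul_const _
  exact hD.deriv

lemma polyV_vderiv {N d f} (j : Fin N) (hf : PolyV N d f) :
    PolyV N d (fun r v t => deriv (fun x => f r (Function.update v j x) t) (v j)) := by
  classical
  obtain ⟨S, c, h1, h2, h3⟩ := hf
  have key : ∀ r v t, deriv (fun x => f r (Function.update v j x) t) (v j)
      = ∑ m ∈ S, ((m j : ℝ) * c m r t) * ∏ k, v k ^ ((m - Finsupp.single j 1 : Fin N →₀ ℕ) k) := by
    intro r v t
    have hprod : ∀ (m : Fin N →₀ ℕ) (x : ℝ),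
        (∏ k, (Function.update v j x k) ^ m k)
          = x ^ m j * ∏ k ∈ Finset.univ.erase j, v k ^ m k := by
      intro m x
      rw [← Finset.mul_prod_erase Finset.univ _ (Finset.mem_univ j), Function.update_self]
      congr 1
      exact Finset.prod_congr rfl fun k hk => by
        rw [Function.update_of_ne (Finset.ne_of_mem_erase hk)]
    have hmon : ∀ m : Fin N →₀ ℕ,
        (∏ k, v k ^ ((m - Finsupp.single j 1 : Fin N →₀ ℕ) k))
          = v j ^ (m j - 1) * ∏ k ∈ Finset.univ.erase j, v k ^ m k := by
      intro m
      rw [← Finset.mul_prod_erase Finset.univ _ (Finset.mem_univ j)]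
      congr 1
      · congr 1
        simp [Finsupp.tsub_apply]
      · refine Finset.prod_congr rfl fun k hk => ?_
        congr 1
        have hkj : j ≠ k := Ne.symm (Finset.ne_of_mem_erase hk)
        simp [Finsupp.tsub_apply, Finsupp.single_apply, hkj]
    have hD : HasDerivAt (fun x => f r (Function.update v j x) t)
        (∑ m ∈ S, c m r t * ((m j : ℝ) * v j ^ (m j - 1) * ∏ k ∈ Finset.univ.erase j, v k ^ m k))
        (v j) := by
      have hfun : (fun x => f r (Function.update v j x) t)
          = fun x => ∑ m ∈ S, c m r t * (x ^ m j * ∏ k ∈ Finset.univ.erase j, v k ^ m k) := by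
        funext x
        rw [h3]
        exact Finset.sum_congr rfl fun m _ => by rw [hprod]
      rw [hfun]
      exact HasDerivAt.fun_sum fun m _ =>
        ((hasDerivAt_pow (m j) (v j)).mul_const _).const_mul _
    rw [hD.deriv]
    exact Finset.sum_congr rfl fun m _ => by rw [hmon]; ring
  refine polyV_congr (fun r v t => (key r v t).symm) ?_
  refine polyV_sum S _ fun m hm =>
    polyV_monomial (fun r t => (m j : ℝ) * c m r t)
      (contDiff_const.mul (h2 m hm)) _ ?_
  refine le_trans (Finset.sum_le_sum fun k _ => ?_) (h1 m hm)
  rw [Finsupp.tsub_apply]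
  exact Nat.sub_le _ _

lemma polyV_vmul {N d f} (j : Fin N) (hf : PolyV N d f) :
    PolyV N (d + 1) (fun r v t => v j * f r v t) := by
  classical
  obtain ⟨S, c, h1, h2, h3⟩ := hf
  have key : ∀ r v t, v j * f r v t
      = ∑ m ∈ S, c m r t * ∏ k, v k ^ ((m + Finsupp.single j 1 : Fin N →₀ ℕ) k) := by
    intro r v t
    rw [h3, Finset.mul_sum]
    refine Finset.sum_congr rfl fun m _ => ?_
    have hmon : (∏ k, v k ^ ((m + Finsupp.single j 1 : Fin N →₀ ℕ) k)) = v j * ∏ k, v k ^ m k := by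
      rw [← Finset.mul_prod_erase Finset.univ
            (fun k => v k ^ ((m + Finsupp.single j 1 : Fin N →₀ ℕ) k)) (Finset.mem_univ j),
          ← Finset.mul_prod_erase Finset.univ (fun k => v k ^ m k) (Finset.mem_univ j)]
      have h4 : (∏ k ∈ Finset.univ.erase j, v k ^ ((m + Finsupp.single j 1 : Fin N →₀ ℕ) k))
          = ∏ k ∈ Finset.univ.erase j, v k ^ m k :=
        Finset.prod_congr rfl fun k hk => by
          have hkj : j ≠ k := Ne.symm (Finset.ne_of_mem_erase hk)
          simp [Finsupp.single_apply, hkj]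
      have h5 : (m + Finsupp.single j 1 : Fin N →₀ ℕ) j = m j + 1 := by simp
      rw [h4, h5, pow_succ]
      ring
    rw [hmon]; ring
  refine polyV_congr (fun r v t => (key r v t).symm) ?_
  refine polyV_sum S _ fun m hm => polyV_monomial _ (h2 m hm) _ ?_
  have hsum : (∑ k, (m + Finsupp.single j 1 : Fin N →₀ ℕ) k) = (∑ k, m k) + 1 := by
    have : ∀ k, (m + Finsupp.single j 1 : Fin N →₀ ℕ) k = m k + (if j = k then 1 else 0) := fun k => by
      simp [Finsupp.single_apply]
    rw [Finset.sum_congr rfl fun k _ => this k, Finset.sum_add_distrib]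
    simp
  rw [hsum]
  exact Nat.add_le_add_right (h1 m hm) 1

/-- For the ODE system `ṙᵢ = vᵢ`, `v̇ᵢ = aᵢ(r,t)` with smooth velocity-independent
accelerations, the recursively defined coefficients
`X̃_{i,1} = vᵢ`,
`X̃_{i,γ+1} = (γ+1)·(Σⱼ [vⱼ ∂X̃_{i,γ}/∂rⱼ + aⱼ(r,t) ∂X̃_{i,γ}/∂vⱼ] + ∂X̃_{i,γ}/∂t)`
are, for every `γ ≥ 2`, polynomials in the velocity variables `v` of total degree at
most `γ - 2`, with coefficients that are smooth functions of `(r, t)`. -/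
theorem recursion_polynomial_in_velocities
    (N : ℕ) (a : Fin N → (Fin N → ℝ) → ℝ → ℝ)
    (ha : ∀ j, ContDiff ℝ (⊤ : ℕ∞) (fun p : (Fin N → ℝ) × ℝ => a j p.1 p.2))
    (Xt : ℕ → Fin N → (Fin N → ℝ) → (Fin N → ℝ) → ℝ → ℝ)
    (h1 : ∀ i r v t, Xt 1 i r v t = v i)
    (hrec : ∀ γ : ℕ, 1 ≤ γ → ∀ i r v t,
      Xt (γ + 1) i r v t = ((γ : ℝ) + 1) *
        ((∑ j, (v j * deriv (fun x => Xt γ i (Function.update r j x) v t) (r j)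
            + a j r t * deriv (fun x => Xt γ i r (Function.update v j x) t) (v j)))
          + deriv (fun x => Xt γ i r v x) t)) :
    ∀ γ : ℕ, 2 ≤ γ → ∀ i,
      ∃ (S : Finset (Fin N →₀ ℕ)) (c : (Fin N →₀ ℕ) → (Fin N → ℝ) → ℝ → ℝ),
        (∀ m ∈ S, (∑ j, m j) ≤ γ - 2) ∧
        (∀ m ∈ S, ContDiff ℝ (⊤ : ℕ∞) (fun p : (Fin N → ℝ) × ℝ => c m p.1 p.2)) ∧
        (∀ r v t, Xt γ i r v t = ∑ m ∈ S, c m r t * ∏ j, v j ^ m j) := by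
  have main : ∀ γ : ℕ, 2 ≤ γ → ∀ i, PolyV N (γ - 2) (Xt γ i) := by
    intro γ hγ
    induction γ, hγ using Nat.le_induction with
    | base =>
      intro i
      have h2 : ∀ r v t, Xt 2 i r v t = 2 * a i r t := by
        intro r v t
        have h := hrec 1 le_rfl i r v t
        norm_num at h
        simp only [h1] at h
        have hdv : ∀ j : Fin N, deriv (fun x => Function.update v j x i) (v j)
            = if i = j then 1 else 0 := by
          intro j
          by_cases hij : i = j
          · subst hij; simp
          · simp [Function.update_of_ne hij, hij]
        simp only [hdv, deriv_const'] at h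
        rw [h]
        simp [mul_ite, mul_one, mul_zero, Finset.sum_ite_eq]
      have hP := polyV_monomial (N := N) (d := 0) (fun r t => 2 * a i r t)
        (contDiff_const.mul (ha i)) 0 (by simp)
      exact polyV_congr (fun r v t => by simp [h2 r v t]) hP
    | succ n hn ih =>
      intro i
      have hrecn := hrec n (by omega)
      refine polyV_congr (fun r v t => (hrecn i r v t).symm) ?_
      rw [show n + 1 - 2 = n - 2 + 1 from by omega]
      refine polyV_smul (fun _ _ => (n : ℝ) + 1) contDiff_const ?_
      refine polyV_add ?_ (polyV_mono (Nat.le_succ _) (polyV_tderiv (ih i)))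
      refine polyV_sum Finset.univ _ fun j _ => ?_
      refine polyV_add (polyV_vmul j (polyV_rderiv j (ih i))) ?_
      exact polyV_mono (Nat.le_succ _) (polyV_smul (a j) (ha j) (polyV_vderiv j (ih i)))
  intro γ hγ i
  exact main γ hγ i
end
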